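/- Let m be a natural number with m > 4, let D_1,…,D_m be positive reals, fix i ∈ {1,…,m}, and let y_1,…,y_m be real numbers. Then ∫_0^∞ t₂(A)·(A+D_i)²·A·exp(y_i²/(A+D_i))·(∏_{j=1}^m (A+D_j)^{−1/2})·exp(−(1/2)·Σ_{j=1}^m y_j²/(A+D_j)) dA < ∞. (This is the propriety claim of Proposition 2 of the paper: for the two-level model without covariates, the matching prior π_{i;sp}(A) ∝ tr[V^{−2}](A+D_i)²·A·exp(y_i²/(A+D_i)) yields a proper posterior whenever m > 4.) -/

import Mathlib

/-!
With `δ = min_u D_u > 0` one has `t₂(A) ≤ m (A + δ)⁻²`, `(A + D_i)/(A + δ) ≤ D_i/δ` and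
`y_i²/(A + D_i) ≤ y_i²/D_i`, so the matching prior grows at most like `A + δ`, while the
likelihood is at most `(A + δ)^(-m/2)`. The posterior is therefore dominated by a multiple of
`(A + δ)^(1 - m/2)`, which is integrable on `(0, ∞)` as soon as `m > 4`.
-/

open Finset MeasureTheory Real Set

variable {ι : Type*} [Fintype ι]

noncomputable def matchingPrior (D : ι → ℝ) (i : ι) (yi A : ℝ) : ℝ :=
  (∑ u, ((A + D u) ^ 2)⁻¹) * (A + D i) ^ 2 * A * exp (yi ^ 2 / (A + D i))

noncomputable def remlLikelihood (D y : ι → ℝ) (A : ℝ) : ℝ :=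
  (∏ j, (A + D j) ^ (-(1 : ℝ) / 2)) * exp (-(1 / 2) * ∑ j, y j ^ 2 / (A + D j))

section

variable {D : ι → ℝ} {δ A : ℝ}

lemma add_div_add_le_div {d : ℝ} (hA : 0 ≤ A) (hδ : 0 < δ) (hd : δ ≤ d) :
    (A + d) / (A + δ) ≤ d / δ := by
  rw [div_le_div_iff₀ (by positivity) hδ]
  nlinarith

lemma sum_inv_sq_add_le (hAδ : 0 < A + δ) (hD : ∀ u, δ ≤ D u) :
    ∑ u, ((A + D u) ^ 2)⁻¹ ≤ Fintype.card ι * ((A + δ) ^ 2)⁻¹ := by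
  rw [← nsmul_eq_mul]
  refine sum_le_card_nsmul _ _ _ fun u _ => ?_
  gcongr
  exact hD u

lemma prod_rpow_neg_half_le (hAδ : 0 < A + δ) (hD : ∀ u, δ ≤ D u) :
    ∏ j, (A + D j) ^ (-(1 : ℝ) / 2) ≤ (A + δ) ^ (-(Fintype.card ι : ℝ) / 2) := by
  calc ∏ j, (A + D j) ^ (-(1 : ℝ) / 2)
      ≤ ∏ _j : ι, (A + δ) ^ (-(1 : ℝ) / 2) :=
        prod_le_prod (fun j _ => rpow_nonneg (by linarith [hD j]) _)
          fun j _ => rpow_le_rpow_of_nonpos hAδ (by linarith [hD j]) (by norm_num)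
    _ = (A + δ) ^ (-(Fintype.card ι : ℝ) / 2) := by
        rw [prod_const, card_univ, ← rpow_natCast, ← rpow_mul hAδ.le]
        ring_nf

lemma matchingPrior_nonneg (hA : 0 ≤ A) (hD : ∀ u, 0 < D u) (i : ι) (yi : ℝ) :
    0 ≤ matchingPrior D i yi A := by
  have := hD i
  unfold matchingPrior
  positivity

lemma matchingPrior_le (hA : 0 ≤ A) (hδ : 0 < δ) (hD : ∀ u, δ ≤ D u) (i : ι) (yi : ℝ) :
    matchingPrior D i yi A
      ≤ Fintype.card ι * (D i / δ) ^ 2 * (A + δ) * exp (yi ^ 2 / D i) := by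
  have hDi : 0 < D i := hδ.trans_le (hD i)
  have hAδ : 0 < A + δ := by positivity
  have htrace : (∑ u, ((A + D u) ^ 2)⁻¹) * (A + D i) ^ 2 ≤ Fintype.card ι * (D i / δ) ^ 2 :=
    calc (∑ u, ((A + D u) ^ 2)⁻¹) * (A + D i) ^ 2
        ≤ Fintype.card ι * ((A + δ) ^ 2)⁻¹ * (A + D i) ^ 2 := by
          gcongr; exact sum_inv_sq_add_le hAδ hD
      _ = Fintype.card ι * ((A + D i) / (A + δ)) ^ 2 := by field_simp
      _ ≤ Fintype.card ι * (D i / δ) ^ 2 := by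
          gcongr _ * ?_ ^ 2
          exact add_div_add_le_div hA hδ (hD i)
  unfold matchingPrior
  gcongr
  · linarith
  · linarith

lemma remlLikelihood_nonneg (hA : 0 ≤ A) (hD : ∀ u, 0 < D u) (y : ι → ℝ) :
    0 ≤ remlLikelihood D y A :=
  mul_nonneg (prod_nonneg fun j _ => rpow_nonneg (by linarith [hD j]) _) (exp_pos _).le

lemma remlLikelihood_le (hAδ : 0 < A + δ) (hD : ∀ u, δ ≤ D u) (y : ι → ℝ) :
    remlLikelihood D y A ≤ (A + δ) ^ (-(Fintype.card ι : ℝ) / 2) := by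
  have hAD : ∀ j, 0 < A + D j := fun j => hAδ.trans_le (by linarith [hD j])
  have hexp : exp (-(1 / 2) * ∑ j, y j ^ 2 / (A + D j)) ≤ 1 :=
    exp_le_one_iff.mpr <| mul_nonpos_of_nonpos_of_nonneg (by norm_num) <|
      sum_nonneg fun j _ => div_nonneg (sq_nonneg _) (hAD j).le
  exact (mul_le_of_le_one_right (prod_nonneg fun j _ => rpow_nonneg (hAD j).le _) hexp).trans
    (prod_rpow_neg_half_le hAδ hD)

lemma continuousOn_matchingPrior (hD : ∀ u, 0 < D u) (i : ι) (yi : ℝ) :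
    ContinuousOn (matchingPrior D i yi) (Ioi 0) := fun A hA => by
  have hne : ∀ u, A + D u ≠ 0 := fun u => (add_pos hA (hD u)).ne'
  unfold matchingPrior
  exact ContinuousAt.continuousWithinAt <| by
    fun_prop (disch := first | exact hne _ | exact pow_ne_zero 2 (hne _))

lemma continuousOn_remlLikelihood (hD : ∀ u, 0 < D u) (y : ι → ℝ) :
    ContinuousOn (remlLikelihood D y) (Ioi 0) := fun A hA => by
  have hne : ∀ u, A + D u ≠ 0 := fun u => (add_pos hA (hD u)).ne'
  unfold remlLikelihood
  exact ContinuousAt.continuousWithinAt <| by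
    fun_prop (disch := first | exact hne _ | exact Or.inl (hne _))

lemma matchingPrior_mul_remlLikelihood_le (hA : 0 ≤ A) (hδ : 0 < δ)
    (hD : ∀ u, δ ≤ D u) (i : ι) (y : ι → ℝ) :
    matchingPrior D i (y i) A * remlLikelihood D y A
      ≤ Fintype.card ι * (D i / δ) ^ 2 * exp (y i ^ 2 / D i)
        * (A + δ) ^ (-(Fintype.card ι : ℝ) / 2 + 1) := by
  have hAδ : 0 < A + δ := by positivity
  have hD₀ : ∀ u, 0 < D u := fun u => hδ.trans_le (hD u)
  calc matchingPrior D i (y i) A * remlLikelihood D y A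
      ≤ Fintype.card ι * (D i / δ) ^ 2 * (A + δ) * exp (y i ^ 2 / D i)
          * (A + δ) ^ (-(Fintype.card ι : ℝ) / 2) :=
        mul_le_mul (matchingPrior_le hA hδ hD i _) (remlLikelihood_le hAδ hD y)
          (remlLikelihood_nonneg hA hD₀ y) (by positivity)
    _ = _ := by rw [rpow_add_one hAδ.ne']; ring

theorem integrableOn_matchingPrior_mul_remlLikelihood (hι : 4 < Fintype.card ι)
    (hD : ∀ u, 0 < D u) (i : ι) (y : ι → ℝ) :
    IntegrableOn (fun A => matchingPrior D i (y i) A * remlLikelihood D y A) (Ioi 0) := by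
  have : Nonempty ι := ⟨i⟩
  obtain ⟨u₀, hu₀⟩ := Finite.exists_min D
  have hdom : IntegrableOn (fun A => Fintype.card ι * (D i / D u₀) ^ 2 * exp (y i ^ 2 / D i)
      * (A + D u₀) ^ (-(Fintype.card ι : ℝ) / 2 + 1)) (Ioi 0) := by
    have : (4 : ℝ) < Fintype.card ι := by exact_mod_cast hι
    exact (integrableOn_add_rpow_Ioi_of_lt (by linarith) (by linarith [hD u₀])).const_mul _
  refine hdom.mono' (((continuousOn_matchingPrior hD i _).mul
    (continuousOn_remlLikelihood hD y)).aestronglyMeasurable measurableSet_Ioi) ?_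
  filter_upwards [ae_restrict_mem measurableSet_Ioi] with A (hA : 0 < A)
  rw [norm_of_nonneg (mul_nonneg (matchingPrior_nonneg hA.le hD i _)
    (remlLikelihood_nonneg hA.le hD y))]
  exact matchingPrior_mul_remlLikelihood_le hA.le (hD u₀) hu₀ i y

end

/-- propriety claim of Proposition 2 of the paper. For the
two-level model without covariates, the matching prior
`tr[V⁻²]·(A+Dᵢ)²·A·exp(yᵢ²/(A+Dᵢ))` yields a proper posterior when `m > 4`. -/
theorem matching_prior_no_covariates_propriety
    (m : ℕ) (hm : 4 < m)
    (D : Fin m → ℝ) (hD : ∀ u, 0 < D u) (i : Fin m)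
    (y : Fin m → ℝ) :
    IntegrableOn
      (fun A : ℝ =>
        (∑ u : Fin m, ((A + D u) ^ 2)⁻¹) * (A + D i) ^ 2 * A
          * Real.exp (y i ^ 2 / (A + D i))
          * (∏ j : Fin m, (A + D j) ^ (-(1 : ℝ) / 2))
          * Real.exp (-(1 / 2) * ∑ j : Fin m, y j ^ 2 / (A + D j)))
      (Set.Ioi (0 : ℝ)) := by
  simpa only [matchingPrior, remlLikelihood, mul_assoc] using
    integrableOn_matchingPrior_mul_remlLikelihood (by simpa using hm) hD i y
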